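/- Let ψ : [1,∞) → ℝ be positive, convex, differentiable with ψ'(t) < 0 for all t ≥ 1, and ψ(t) → 0 as t → ∞; set λ(t) = ψ(t)/|ψ'(t)| and α(t) = ψ(t)/(t·|ψ'(t)|). Assume λ is nondecreasing and α is nonincreasing on [1,∞). Then for every n ∈ ℕ (n ≥ 1) with α(n) ≤ 1/4, one has ψ(n)·λ(n) ≤ Σ_{k=n}^∞ ψ(k) ≤ ψ(n)·λ(n)·(1 + (4/3)·α(n)) + ψ(n). -/

import Mathlib

/-!
Write `α = α(n)` and `c = 1/α`. Since `α` is nonincreasing, `ψ(t) ≤ α t |ψ'(t)|` for `t ≥ n`, i.e.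
`t ↦ t^c ψ(t)` is nonincreasing there, so `ψ(t) ≤ ψ(n) (n/t)^c` and
`∫_n^∞ ψ ≤ ψ(n) n / (c - 1) = ψ(n) λ(n) / (1 - α) ≤ ψ(n) λ(n) (1 + 4α/3)` when `α ≤ 1/4`.
Since `λ` is nondecreasing, `ψ(t) ≥ λ(n) |ψ'(t)|` for `t ≥ n`, and integrating `ψ'` gives
`∫_n^∞ ψ ≥ λ(n) ψ(n)`. The integral test for the decreasing function `ψ`,
`∫_n^∞ ψ ≤ Σ_{k ≥ n} ψ(k) ≤ ψ(n) + ∫_n^∞ ψ`, turns both bounds into bounds for the series.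
-/

open MeasureTheory Real Filter Topology Set

lemma antitoneOn_Ici_of_hasDerivAt_nonpos {f f' : ℝ → ℝ} {a : ℝ}
    (hf : ∀ x ∈ Ici a, HasDerivAt f (f' x) x) (hf' : ∀ x ∈ Ioi a, f' x ≤ 0) :
    AntitoneOn f (Ici a) :=
  antitoneOn_of_hasDerivWithinAt_nonpos (convex_Ici a)
    (fun x hx ↦ (hf x hx).continuousAt.continuousWithinAt)
    (fun x hx ↦ (hf x (interior_subset hx)).hasDerivWithinAt)
    (by rwa [interior_Ici])

section IntegralTest

variable {f : ℝ → ℝ} {a : ℝ}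

lemma sum_range_succ_le_integral_Ioi (hf : AntitoneOn f (Ici a)) (hf0 : ∀ x ∈ Ici a, 0 ≤ f x)
    (hfi : IntegrableOn f (Ioi a)) (K : ℕ) :
    ∑ k ∈ Finset.range K, f (a + ↑(k + 1)) ≤ ∫ x in Ioi a, f x :=
  calc ∑ k ∈ Finset.range K, f (a + ↑(k + 1)) ≤ ∫ x in a..a + K, f x :=
        (hf.mono Icc_subset_Ici_self).sum_le_integral
    _ ≤ ∫ x in Ioi a, f x := by
      rw [intervalIntegral.integral_of_le (le_add_of_nonneg_right K.cast_nonneg)]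
      exact setIntegral_mono_set hfi
        (ae_restrict_of_forall_mem measurableSet_Ioi fun x hx ↦ hf0 x (Ioi_subset_Ici_self hx))
        Ioc_subset_Ioi_self.eventuallyLE

lemma summable_nat_add_of_antitoneOn (hf : AntitoneOn f (Ici a)) (hf0 : ∀ x ∈ Ici a, 0 ≤ f x)
    (hfi : IntegrableOn f (Ioi a)) : Summable fun k : ℕ ↦ f (a + k) :=
  (summable_nat_add_iff 1).1 <| summable_of_sum_range_le
    (fun _ ↦ hf0 _ (by simp; positivity)) (sum_range_succ_le_integral_Ioi hf hf0 hfi)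

lemma tsum_nat_add_le_add_integral_Ioi (hf : AntitoneOn f (Ici a))
    (hf0 : ∀ x ∈ Ici a, 0 ≤ f x) (hfi : IntegrableOn f (Ioi a)) :
    ∑' k : ℕ, f (a + k) ≤ f a + ∫ x in Ioi a, f x := by
  rw [(summable_nat_add_of_antitoneOn hf hf0 hfi).tsum_eq_zero_add, Nat.cast_zero, add_zero]
  gcongr
  exact Real.tsum_le_of_sum_range_le (fun _ ↦ hf0 _ (by simp; positivity))
    (sum_range_succ_le_integral_Ioi hf hf0 hfi)

lemma integral_Ioi_le_tsum_nat_add (hf : AntitoneOn f (Ici a)) (hf0 : ∀ x ∈ Ici a, 0 ≤ f x)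
    (hfi : IntegrableOn f (Ioi a)) :
    ∫ x in Ioi a, f x ≤ ∑' k : ℕ, f (a + k) := by
  refine le_of_tendsto (intervalIntegral_tendsto_integral_Ioi a hfi
    (tendsto_atTop_add_const_left _ a tendsto_natCast_atTop_atTop)) (Eventually.of_forall ?_)
  intro K
  calc ∫ x in a..a + K, f x ≤ ∑ k ∈ Finset.range K, f (a + k) :=
        (hf.mono Icc_subset_Ici_self).integral_le_sum
    _ ≤ ∑' k : ℕ, f (a + k) :=
        (summable_nat_add_of_antitoneOn hf hf0 hfi).sum_le_tsum _
          fun _ _ ↦ hf0 _ (by simp)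

end IntegralTest

section PowerDecay

variable {f f' : ℝ → ℝ} {a c : ℝ}

lemma antitoneOn_rpow_mul_of_mul_add_mul_deriv_nonpos (ha : 0 < a)
    (hf : ∀ t ∈ Ici a, HasDerivAt f (f' t) t) (hc : ∀ t ∈ Ioi a, c * f t + t * f' t ≤ 0) :
    AntitoneOn (fun t ↦ t ^ c * f t) (Ici a) := by
  refine antitoneOn_Ici_of_hasDerivAt_nonpos
    (f' := fun t ↦ c * t ^ (c - 1) * f t + t ^ c * f' t) (fun t ht ↦ ?_) (fun t ht ↦ ?_)
  · exact (hasDerivAt_rpow_const (Or.inl (ha.trans_le ht).ne')).mul (hf t ht)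
  · have ht0 : 0 < t := ha.trans ht
    calc c * t ^ (c - 1) * f t + t ^ c * f' t = t ^ (c - 1) * (c * f t + t * f' t) := by
          rw [rpow_sub_one ht0.ne']
          field_simp
      _ ≤ 0 := mul_nonpos_of_nonneg_of_nonpos (rpow_nonneg ht0.le _) (hc t ht)

lemma le_mul_rpow_neg_of_antitoneOn_rpow_mul (ha : 0 < a)
    (h : AntitoneOn (fun t ↦ t ^ c * f t) (Ici a)) {t : ℝ} (ht : a ≤ t) :
    f t ≤ f a * a ^ c * t ^ (-c) := by
  have ht0 : 0 < t ^ c := rpow_pos_of_pos (ha.trans_le ht) c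
  rw [rpow_neg (ha.le.trans ht), ← div_eq_mul_inv, le_div_iff₀ ht0, mul_comm (f t)]
  linarith [h self_mem_Ici ht ht]

lemma integrableOn_Ioi_of_antitoneOn_rpow_mul (ha : 0 < a) (hc : 1 < c)
    (hcont : ContinuousOn f (Ioi a)) (hf0 : ∀ t ∈ Ioi a, 0 ≤ f t)
    (h : AntitoneOn (fun t ↦ t ^ c * f t) (Ici a)) : IntegrableOn f (Ioi a) := by
  refine Integrable.mono' ((integrableOn_Ioi_rpow_of_lt (by linarith : -c < -1) ha).const_mul
    (f a * a ^ c)) (hcont.aestronglyMeasurable measurableSet_Ioi) ?_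
  refine ae_restrict_of_forall_mem measurableSet_Ioi fun t ht ↦ ?_
  rw [norm_of_nonneg (hf0 t ht)]
  exact le_mul_rpow_neg_of_antitoneOn_rpow_mul ha h ht.le

lemma integral_Ioi_le_of_antitoneOn_rpow_mul (ha : 0 < a) (hc : 1 < c)
    (hfi : IntegrableOn f (Ioi a)) (h : AntitoneOn (fun t ↦ t ^ c * f t) (Ici a)) :
    ∫ t in Ioi a, f t ≤ f a * a / (c - 1) :=
  calc ∫ t in Ioi a, f t ≤ ∫ t in Ioi a, f a * a ^ c * t ^ (-c) :=
        setIntegral_mono_on hfi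
          ((integrableOn_Ioi_rpow_of_lt (by linarith : -c < -1) ha).const_mul _) measurableSet_Ioi
          fun t ht ↦ le_mul_rpow_neg_of_antitoneOn_rpow_mul ha h ht.le
    _ = f a * (a ^ c * a ^ (-c + 1)) / (c - 1) := by
        rw [integral_const_mul, integral_Ioi_rpow_of_lt (by linarith) ha,
          show -c + 1 = -(c - 1) by ring, div_neg, neg_div, neg_neg]
        ring
    _ = f a * a / (c - 1) := by
        rw [← rpow_add ha, add_neg_cancel_left, rpow_one]

end PowerDecay

lemma mul_le_integral_Ioi_of_mul_neg_deriv_le {f f' : ℝ → ℝ} {a L : ℝ}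
    (hf : ∀ t ∈ Ici a, HasDerivAt f (f' t) t) (hf' : ∀ t ∈ Ioi a, f' t ≤ 0)
    (hlim : Tendsto f atTop (𝓝 0)) (hfi : IntegrableOn f (Ioi a))
    (hL : ∀ t ∈ Ioi a, L * -f' t ≤ f t) :
    L * f a ≤ ∫ t in Ioi a, f t :=
  calc L * f a = ∫ t in Ioi a, L * -f' t := by
        rw [integral_const_mul, integral_neg, integral_Ioi_of_hasDerivAt_of_nonpos' hf hf' hlim]
        ring
    _ ≤ ∫ t in Ioi a, f t :=
        setIntegral_mono_on ((integrableOn_Ioi_deriv_of_nonpos' hf hf' hlim).neg.const_mul L)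
          hfi measurableSet_Ioi hL

lemma div_inv_sub_one_le_mul {x α : ℝ} (hx : 0 ≤ x) (hα0 : 0 < α) (hα : α ≤ 1 / 4) :
    x / (α⁻¹ - 1) ≤ x * α * (1 + 4 / 3 * α) := by
  have h : α⁻¹ - 1 = (1 - α) / α := by field_simp
  rw [h, div_div_eq_mul_div, div_le_iff₀ (by linarith)]
  nlinarith [mul_nonneg (mul_nonneg hx hα0.le) (by linarith : 0 ≤ 1 - 4 * α)]

lemma inv_mul_add_mul_nonpos_of_div_mul_abs_le {x y t α : ℝ} (ht : 0 < t) (hy : y < 0)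
    (hα : 0 < α) (h : x / (t * |y|) ≤ α) : α⁻¹ * x + t * y ≤ 0 := by
  rw [div_le_iff₀ (mul_pos ht (abs_pos.2 hy.ne)), abs_of_neg hy, ← inv_mul_le_iff₀ hα] at h
  linarith

lemma mul_neg_le_of_le_div_abs {x y L : ℝ} (hy : y < 0) (h : L ≤ x / |y|) : L * -y ≤ x := by
  rwa [le_div_iff₀ (abs_pos.2 hy.ne), abs_of_neg hy] at h

theorem sum_psi_two_sided (ψ ψ' : ℝ → ℝ)
    (hpos : ∀ t, 1 ≤ t → 0 < ψ t)
    (hderiv : ∀ t, 1 ≤ t → HasDerivAt ψ (ψ' t) t)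
    (hneg : ∀ t, 1 ≤ t → ψ' t < 0)
    (hlim : Filter.Tendsto ψ Filter.atTop (nhds 0))
    (hlam_mono : ∀ s t, 1 ≤ s → s ≤ t → ψ s / |ψ' s| ≤ ψ t / |ψ' t|)
    (halp_anti : ∀ s t, 1 ≤ s → s ≤ t → ψ t / (t * |ψ' t|) ≤ ψ s / (s * |ψ' s|))
    (n : ℕ) (hn : 1 ≤ n) (hα : ψ (n : ℝ) / ((n : ℝ) * |ψ' (n : ℝ)|) ≤ 1 / 4) :
    ψ (n : ℝ) * (ψ (n : ℝ) / |ψ' (n : ℝ)|) ≤ (∑' k : ℕ, ψ ((k + n : ℕ) : ℝ)) ∧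
      (∑' k : ℕ, ψ ((k + n : ℕ) : ℝ)) ≤
        ψ (n : ℝ) * (ψ (n : ℝ) / |ψ' (n : ℝ)|) *
            (1 + (4 / 3) * (ψ (n : ℝ) / ((n : ℝ) * |ψ' (n : ℝ)|))) + ψ (n : ℝ) := by
  set N : ℝ := (n : ℝ)
  set α := ψ N / (N * |ψ' N|)
  have hN : 1 ≤ N := Nat.one_le_cast.2 hn
  have hN0 : 0 < N := by linarith
  have hψ : ∀ t ∈ Ici N, HasDerivAt ψ (ψ' t) t := fun t ht ↦ hderiv t (hN.trans ht)
  have hψ' : ∀ t ∈ Ioi N, ψ' t ≤ 0 := fun t ht ↦ (hneg t (hN.trans ht.le)).le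
  have hψ0 : ∀ t ∈ Ici N, 0 ≤ ψ t := fun t ht ↦ (hpos t (hN.trans ht)).le
  have hα0 : 0 < α := div_pos (hpos N hN) (mul_pos hN0 (abs_pos.2 (hneg N hN).ne))
  have hdecay : ∀ t ∈ Ioi N, α⁻¹ * ψ t + t * ψ' t ≤ 0 := fun t ht ↦
    inv_mul_add_mul_nonpos_of_div_mul_abs_le (hN0.trans ht)
      (hneg t (hN.trans ht.le)) hα0 (halp_anti N t hN ht.le)
  have hc : 1 < α⁻¹ := (one_lt_inv₀ hα0).2 (by linarith)
  have hweighted := antitoneOn_rpow_mul_of_mul_add_mul_deriv_nonpos hN0 hψ hdecay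
  have hfi : IntegrableOn ψ (Ioi N) :=
    integrableOn_Ioi_of_antitoneOn_rpow_mul hN0 hc
      (fun t ht ↦ (hψ t (Ioi_subset_Ici_self ht)).continuousAt.continuousWithinAt)
      (fun t ht ↦ hψ0 t (Ioi_subset_Ici_self ht)) hweighted
  have hlower : ψ N / |ψ' N| * ψ N ≤ ∫ t in Ioi N, ψ t :=
    mul_le_integral_Ioi_of_mul_neg_deriv_le hψ hψ' hlim hfi fun t ht ↦
      mul_neg_le_of_le_div_abs (hneg t (hN.trans ht.le)) (hlam_mono N t hN ht.le)
  have hupper := integral_Ioi_le_of_antitoneOn_rpow_mul hN0 hc hfi hweighted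
  have hanti := antitoneOn_Ici_of_hasDerivAt_nonpos hψ hψ'
  have hlam : ψ N / |ψ' N| = N * α := by
    have : N ≠ 0 := hN0.ne'
    simp only [α]
    field_simp
  have hsum : ∑' k : ℕ, ψ ((k + n : ℕ) : ℝ) = ∑' k : ℕ, ψ (N + k) :=
    tsum_congr fun k ↦ by rw [Nat.cast_add, add_comm]
  rw [hsum, hlam]
  constructor
  · calc ψ N * (N * α) = ψ N / |ψ' N| * ψ N := by rw [hlam, mul_comm]
      _ ≤ ∫ t in Ioi N, ψ t := hlower
      _ ≤ ∑' k : ℕ, ψ (N + k) := integral_Ioi_le_tsum_nat_add hanti hψ0 hfi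
  · calc ∑' k : ℕ, ψ (N + k) ≤ ψ N + ∫ t in Ioi N, ψ t :=
          tsum_nat_add_le_add_integral_Ioi hanti hψ0 hfi
      _ ≤ ψ N + ψ N * N * α * (1 + 4 / 3 * α) := by
          grw [hupper,
            div_inv_sub_one_le_mul (mul_nonneg (hψ0 N self_mem_Ici) hN0.le) hα0 hα]
      _ = ψ N * (N * α) * (1 + 4 / 3 * α) + ψ N := by ring
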